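/- Let α, β, σ ∈ ℝ with α ≠ β, and let u : ℝ³ → ℝ be infinitely differentiable in (t, x, y). Define G = ∂_x∂_t u − (∂_x u)² ∂_x² u + α (∂_y u)(∂_x² u) + β (∂_x u)(∂_x∂_y u) + ∂_x⁴ u + σ ∂_y² u, and define X = −y ( ∂_t u − (1/3)(∂_x u)³ + α (∂_y u)(∂_x u) + ∂_x³ u ) and Y = σ u − y ( σ ∂_y u − (1/2)(α − β)(∂_x u)² ). Then for every (t,x,y) ∈ ℝ³: (∂_x u)² = (2/(α − β)) ( ∂_x X + ∂_y Y + y G ). -/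

import Mathlib

/-- Partial derivative with respect to `t` of a function of `(t,x,y)`. -/
noncomputable def Dt (u : ℝ → ℝ → ℝ → ℝ) : ℝ → ℝ → ℝ → ℝ :=
  fun t x y => deriv (fun s => u s x y) t

/-- Partial derivative with respect to `x`. -/
noncomputable def Dx (u : ℝ → ℝ → ℝ → ℝ) : ℝ → ℝ → ℝ → ℝ :=
  fun t x y => deriv (fun s => u t s y) x

/-- Partial derivative with respect to `y`. -/
noncomputable def Dy (u : ℝ → ℝ → ℝ → ℝ) : ℝ → ℝ → ℝ → ℝ :=
  fun t x y => deriv (fun s => u t x s) y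

/-- Joint infinite differentiability of a function of `(t,x,y)`. -/
def Smooth3 (u : ℝ → ℝ → ℝ → ℝ) : Prop :=
  ContDiff ℝ (⊤ : ℕ∞) fun p : ℝ × ℝ × ℝ => u p.1 p.2.1 p.2.2

/-!
Differentiating the fluxes by the product and chain rules, `D_x X + D_y Y + y G` collapses to
`(α - β)/2 · u_x²`: the `y`-weighted terms cancel once the mixed partials `u_{xy}` and `u_{yx}`
are identified, and the only term without a factor `y` comes from differentiating the explicit
`y` in `Y`.
-/

def uncurry3 (u : ℝ → ℝ → ℝ → ℝ) : ℝ × ℝ × ℝ → ℝ := fun p => u p.1 p.2.1 p.2.2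

section Slices

variable {u : ℝ → ℝ → ℝ → ℝ} {t x y : ℝ}

theorem hasDerivAt_slice_t (h : DifferentiableAt ℝ (uncurry3 u) (t, x, y)) :
    HasDerivAt (fun s => u s x y) (fderiv ℝ (uncurry3 u) (t, x, y) (1, 0, 0)) t :=
  (h.hasFDerivAt.comp_hasDerivAt t
    ((hasDerivAt_id t).prodMk ((hasDerivAt_const t x).prodMk (hasDerivAt_const t y))) :)

theorem hasDerivAt_slice_x (h : DifferentiableAt ℝ (uncurry3 u) (t, x, y)) :
    HasDerivAt (fun s => u t s y) (fderiv ℝ (uncurry3 u) (t, x, y) (0, 1, 0)) x :=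
  (h.hasFDerivAt.comp_hasDerivAt x
    ((hasDerivAt_const x t).prodMk ((hasDerivAt_id x).prodMk (hasDerivAt_const x y))) :)

theorem hasDerivAt_slice_y (h : DifferentiableAt ℝ (uncurry3 u) (t, x, y)) :
    HasDerivAt (fun s => u t x s) (fderiv ℝ (uncurry3 u) (t, x, y) (0, 0, 1)) y :=
  (h.hasFDerivAt.comp_hasDerivAt y
    ((hasDerivAt_const y t).prodMk ((hasDerivAt_const y x).prodMk (hasDerivAt_id y))) :)

theorem dt_eq_fderiv (h : DifferentiableAt ℝ (uncurry3 u) (t, x, y)) :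
    Dt u t x y = fderiv ℝ (uncurry3 u) (t, x, y) (1, 0, 0) :=
  (hasDerivAt_slice_t h).deriv

theorem dx_eq_fderiv (h : DifferentiableAt ℝ (uncurry3 u) (t, x, y)) :
    Dx u t x y = fderiv ℝ (uncurry3 u) (t, x, y) (0, 1, 0) :=
  (hasDerivAt_slice_x h).deriv

theorem dy_eq_fderiv (h : DifferentiableAt ℝ (uncurry3 u) (t, x, y)) :
    Dy u t x y = fderiv ℝ (uncurry3 u) (t, x, y) (0, 0, 1) :=
  (hasDerivAt_slice_y h).deriv

end Slices

theorem fderiv_fderiv_apply {E F : Type*} [NormedAddCommGroup E] [NormedSpace ℝ E]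
    [NormedAddCommGroup F] [NormedSpace ℝ F] {f : E → F} {p : E}
    (hf : DifferentiableAt ℝ (fderiv ℝ f) p) (v w : E) :
    fderiv ℝ (fun q => fderiv ℝ f q v) p w = fderiv ℝ (fderiv ℝ f) p w v := by
  rw [fderiv_clm_apply hf (differentiableAt_const v)]
  simp

namespace Smooth3

variable {u : ℝ → ℝ → ℝ → ℝ}

theorem contDiff (hu : Smooth3 u) : ContDiff ℝ (⊤ : ℕ∞) (uncurry3 u) := hu

theorem differentiable (hu : Smooth3 u) : Differentiable ℝ (uncurry3 u) :=
  hu.contDiff.differentiable (by simp)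

theorem differentiable_fderiv (hu : Smooth3 u) : Differentiable ℝ (fderiv ℝ (uncurry3 u)) :=
  (hu.contDiff.fderiv_right (m := (⊤ : ℕ∞)) (by exact_mod_cast le_top)).differentiable (by simp)

theorem contDiff_fderiv_apply (hu : Smooth3 u) (v : ℝ × ℝ × ℝ) :
    ContDiff ℝ (⊤ : ℕ∞) fun p => fderiv ℝ (uncurry3 u) p v :=
  (hu.contDiff.fderiv_right (by exact_mod_cast le_top)).clm_apply contDiff_const

theorem uncurry3_dt (hu : Smooth3 u) :
    uncurry3 (Dt u) = fun p => fderiv ℝ (uncurry3 u) p (1, 0, 0) :=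
  funext fun p => dt_eq_fderiv (hu.differentiable p)

theorem uncurry3_dx (hu : Smooth3 u) :
    uncurry3 (Dx u) = fun p => fderiv ℝ (uncurry3 u) p (0, 1, 0) :=
  funext fun p => dx_eq_fderiv (hu.differentiable p)

theorem uncurry3_dy (hu : Smooth3 u) :
    uncurry3 (Dy u) = fun p => fderiv ℝ (uncurry3 u) p (0, 0, 1) :=
  funext fun p => dy_eq_fderiv (hu.differentiable p)

theorem dt (hu : Smooth3 u) : Smooth3 (Dt u) :=
  (hu.uncurry3_dt ▸ hu.contDiff_fderiv_apply (1, 0, 0) :)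

theorem dx (hu : Smooth3 u) : Smooth3 (Dx u) :=
  (hu.uncurry3_dx ▸ hu.contDiff_fderiv_apply (0, 1, 0) :)

theorem dy (hu : Smooth3 u) : Smooth3 (Dy u) :=
  (hu.uncurry3_dy ▸ hu.contDiff_fderiv_apply (0, 0, 1) :)

theorem hasDerivAt_dx (hu : Smooth3 u) (t x y : ℝ) :
    HasDerivAt (fun s => u t s y) (Dx u t x y) x :=
  (hasDerivAt_slice_x (hu.differentiable _)).differentiableAt.hasDerivAt

theorem hasDerivAt_dy (hu : Smooth3 u) (t x y : ℝ) :
    HasDerivAt (fun s => u t x s) (Dy u t x y) y :=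
  (hasDerivAt_slice_y (hu.differentiable _)).differentiableAt.hasDerivAt

theorem dx_dy (hu : Smooth3 u) : Dx (Dy u) = Dy (Dx u) := by
  funext t x y
  have hsymm : IsSymmSndFDerivAt ℝ (uncurry3 u) (t, x, y) :=
    hu.contDiff.contDiffAt.isSymmSndFDerivAt (by simp; exact WithTop.coe_le_coe.2 le_top)
  rw [dx_eq_fderiv (hu.dy.differentiable _), dy_eq_fderiv (hu.dx.differentiable _),
    hu.uncurry3_dy, hu.uncurry3_dx, fderiv_fderiv_apply (hu.differentiable_fderiv _),
    fderiv_fderiv_apply (hu.differentiable_fderiv _)]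
  exact hsymm _ _

end Smooth3

section Fluxes

variable (α β σ : ℝ) (u : ℝ → ℝ → ℝ → ℝ)

noncomputable def umkp : ℝ → ℝ → ℝ → ℝ := fun t x y =>
  Dx (Dt u) t x y - Dx u t x y ^ 2 * Dx (Dx u) t x y + α * Dy u t x y * Dx (Dx u) t x y
    + β * Dx u t x y * Dx (Dy u) t x y + Dx (Dx (Dx (Dx u))) t x y + σ * Dy (Dy u) t x y

noncomputable def umkpFluxX : ℝ → ℝ → ℝ → ℝ := fun t x y =>
  -(y * (Dt u t x y - 1 / 3 * Dx u t x y ^ 3 + α * Dy u t x y * Dx u t x y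
    + Dx (Dx (Dx u)) t x y))

noncomputable def umkpFluxY : ℝ → ℝ → ℝ → ℝ := fun t x y =>
  σ * u t x y - y * (σ * Dy u t x y - 1 / 2 * (α - β) * Dx u t x y ^ 2)

variable {α β σ u}

theorem Smooth3.hasDerivAt_dx_umkpFluxX (hu : Smooth3 u) (t x y : ℝ) :
    HasDerivAt (fun s => umkpFluxX α u t s y)
      (-(y * (Dx (Dt u) t x y - Dx u t x y ^ 2 * Dx (Dx u) t x y
        + α * (Dx (Dy u) t x y * Dx u t x y + Dy u t x y * Dx (Dx u) t x y)
        + Dx (Dx (Dx (Dx u))) t x y))) x := by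
  have hux := hu.dx.hasDerivAt_dx t x y
  refine ((((hu.dt.hasDerivAt_dx t x y).sub ((hux.pow 3).const_mul (1 / 3))).add
    ((hu.dy.hasDerivAt_dx t x y).const_mul α |>.mul hux)).add
    (hu.dx.dx.dx.hasDerivAt_dx t x y) |>.const_mul y |>.neg).congr_deriv ?_
  push_cast
  ring

theorem Smooth3.hasDerivAt_dy_umkpFluxY (hu : Smooth3 u) (t x y : ℝ) :
    HasDerivAt (fun s => umkpFluxY α β σ u t x s)
      ((α - β) / 2 * Dx u t x y ^ 2
        - y * (σ * Dy (Dy u) t x y - (α - β) * Dx u t x y * Dy (Dx u) t x y)) y := by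
  refine ((hu.hasDerivAt_dy t x y).const_mul σ).sub ((hasDerivAt_id y).mul
    (((hu.dy.hasDerivAt_dy t x y).const_mul σ).sub
      (((hu.dx.hasDerivAt_dy t x y).pow 2).const_mul (1 / 2 * (α - β))))) |>.congr_deriv ?_
  simp only [id, Pi.sub_apply, Pi.pow_apply]
  push_cast
  ring

theorem Smooth3.dx_umkpFluxX_add_dy_umkpFluxY (hu : Smooth3 u) (t x y : ℝ) :
    Dx (umkpFluxX α u) t x y + Dy (umkpFluxY α β σ u) t x y + y * umkp α β σ u t x y
      = (α - β) / 2 * Dx u t x y ^ 2 := by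
  rw [Dx, Dy, (hu.hasDerivAt_dx_umkpFluxX t x y).deriv, (hu.hasDerivAt_dy_umkpFluxY t x y).deriv,
    umkp, hu.dx_dy]
  ring

end Fluxes

/-- Divergence identity for the conserved density `u_x²` of the universal
modified KP equation
`G = u_{tx} - u_x² u_{xx} + α u_y u_{xx} + β u_x u_{xy} + u_{xxxx} + σ u_{yy}`:
with `X = -y(u_t - (1/3)u_x³ + α u_y u_x + u_{xxx})` and
`Y = σ u - y(σ u_y - (1/2)(α-β)u_x²)`, one has
`u_x² = (2/(α-β)) (D_x X + D_y Y + y G)`. -/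
theorem umkp_L2_divergence_identity (α β σ : ℝ) (hαβ : α ≠ β)
    (u : ℝ → ℝ → ℝ → ℝ) (hu : Smooth3 u)
    (G X Y : ℝ → ℝ → ℝ → ℝ)
    (hG : ∀ t x y, G t x y = Dx (Dt u) t x y
      - (Dx u t x y) ^ 2 * Dx (Dx u) t x y
      + α * Dy u t x y * Dx (Dx u) t x y
      + β * Dx u t x y * Dx (Dy u) t x y
      + Dx (Dx (Dx (Dx u))) t x y
      + σ * Dy (Dy u) t x y)
    (hX : ∀ t x y, X t x y = -(y * (Dt u t x y - (1 / 3) * (Dx u t x y) ^ 3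
      + α * Dy u t x y * Dx u t x y + Dx (Dx (Dx u)) t x y)))
    (hY : ∀ t x y, Y t x y = σ * u t x y
      - y * (σ * Dy u t x y - (1 / 2) * (α - β) * (Dx u t x y) ^ 2)) :
    ∀ t x y : ℝ,
      (Dx u t x y) ^ 2 =
        (2 / (α - β)) * (Dx X t x y + Dy Y t x y + y * G t x y) := by
  obtain rfl : G = umkp α β σ u := funext₃ hG
  obtain rfl : X = umkpFluxX α u := funext₃ hX
  obtain rfl : Y = umkpFluxY α β σ u := funext₃ hY
  intro t x y
  rw [hu.dx_umkpFluxX_add_dy_umkpFluxY]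
  field_simp [sub_ne_zero.2 hαβ]
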